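/- Let R be a right duo ring. Then every R-module is fusible if and only if R is a division ring. -/

import Mathlib

/-!
If every nonzero element of `R` is a unit, only `0` has a nonzero annihilator, so `m = 0 + m`
witnesses fusibility. Conversely, for `a ≠ 0` the right duo condition makes `aR` a two-sided
ideal, so `a` annihilates the cyclic module `R ⧸ aR`. A fusible module annihilated by a nonzero
element is zero, hence `aR = R`: every nonzero element is right invertible, which forces `R` to be
a division ring.
-/

open MulOpposite

/-- `M` is a fusible right `R`-module: every nonzero element is the sum of an element
with nonzero annihilator and an element with zero annihilator. -/
def FusibleModule (R M : Type*) [Ring R] [AddCommGroup M] [Module Rᵐᵒᵖ M] : Prop :=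
  ∀ m : M, m ≠ 0 → ∃ x y : M, (∃ r : R, r ≠ 0 ∧ op r • x = 0) ∧
    (∀ r : R, op r • y = 0 → r = 0) ∧ m = x + y

theorem FusibleModule.subsingleton_of_smul_eq_zero {R M : Type*} [Ring R] [AddCommGroup M]
    [Module Rᵐᵒᵖ M] (hM : FusibleModule R M) {r : R} (hr : r ≠ 0)
    (hkill : ∀ m : M, op r • m = 0) : Subsingleton M := by
  refine subsingleton_of_forall_eq 0 fun m => by_contra fun hm => ?_
  obtain ⟨-, y, -, hy, -⟩ := hM m hm
  exact hr (hy r (hkill y))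

theorem fusibleModule_of_forall_isUnit {R M : Type*} [Ring R] [Nontrivial R] [AddCommGroup M]
    [Module Rᵐᵒᵖ M] (h : ∀ a : R, a ≠ 0 → IsUnit a) : FusibleModule R M := by
  intro m hm
  refine ⟨0, m, ⟨1, one_ne_zero, smul_zero _⟩, fun r hr => ?_, (zero_add m).symm⟩
  by_contra hr0
  exact hm ((h r hr0).op.smul_eq_zero.mp hr)

theorem op_smul_quotient_span_singleton_eq_zero {R : Type*} [Ring R]
    (hduo : ∀ a r : R, ∃ r' : R, r * a = a * r') (a : R) (y : R ⧸ (Rᵐᵒᵖ ∙ a)) :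
    op a • y = 0 := by
  obtain ⟨b, rfl⟩ := Submodule.Quotient.mk_surjective _ y
  obtain ⟨c, hc⟩ := hduo a b
  rw [← Submodule.Quotient.mk_smul, Submodule.Quotient.mk_eq_zero, Submodule.mem_span_singleton]
  exact ⟨op c, hc.symm⟩

theorem exists_mul_eq_one_of_subsingleton_quotient_span_singleton {R : Type*} [Ring R] {a : R}
    [Subsingleton (R ⧸ (Rᵐᵒᵖ ∙ a))] : ∃ b : R, a * b = 1 := by
  have hone : (1 : R) ∈ (Rᵐᵒᵖ ∙ a) :=
    (Submodule.Quotient.mk_eq_zero (Rᵐᵒᵖ ∙ a)).mp (Subsingleton.elim _ 0)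
  obtain ⟨c, hc⟩ := Submodule.mem_span_singleton.mp hone
  exact ⟨c.unop, hc⟩

theorem isUnit_of_forall_exists_mul_eq_one {M : Type*} [MonoidWithZero M] [Nontrivial M]
    (h : ∀ a : M, a ≠ 0 → ∃ b, a * b = 1) {a : M} (ha : a ≠ 0) : IsUnit a := by
  obtain ⟨b, hab⟩ := h a ha
  obtain ⟨c, hbc⟩ := h b (right_ne_zero_of_mul_eq_one hab)
  obtain rfl := left_inv_eq_right_inv hab hbc
  exact ⟨⟨a, b, hab, hbc⟩, rfl⟩

/-- For a right duo ring `R`, every right `R`-module is fusible iff `R` is a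
division ring. -/
theorem every_module_fusible_iff_divisionRing (R : Type u) [Ring R] [Nontrivial R]
    (hduo : ∀ a r : R, ∃ r' : R, r * a = a * r') :
    (∀ (M : Type u) [AddCommGroup M] [Module Rᵐᵒᵖ M], FusibleModule R M) ↔
      ∀ a : R, a ≠ 0 → IsUnit a := by
  refine ⟨fun h _ => isUnit_of_forall_exists_mul_eq_one fun a ha => ?_,
    fun h _ _ _ => fusibleModule_of_forall_isUnit h⟩
  have : Subsingleton (R ⧸ (Rᵐᵒᵖ ∙ a)) :=
    (h _).subsingleton_of_smul_eq_zero ha (op_smul_quotient_span_singleton_eq_zero hduo a)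
  exact exists_mul_eq_one_of_subsingleton_quotient_span_singleton
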